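/- arXiv:1808.10473 — 3 statements merged into one kernel-verified Lean document; each statement's English description precedes it below -/
import Mathlib

section
/- Let D = diag(λ_1, …, λ_n) with λ_1 ≥ ⋯ ≥ λ_{n-1} > λ_n ≥ 0, let g = λ_{n-1} − λ_n > 0, let u ∈ ℝⁿ, and let z = e_n be the n-th standard basis vector. Then the smallest eigenvalue of D + u uᵀ satisfies λ_min(D + u uᵀ) ≥ λ_n + g·(zᵀu)² / (g + ‖u‖₂²). -/
open Matrix

lemma key (g U c t s p : ℝ) (hg : 0 < g) (hU : c^2 ≤ U) (hp : 0 ≤ p)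
    (ht : t^2 = 1 - p) (hcs : (s - c*t)^2 ≤ (U - c^2)*p) :
    g * c^2 / (g + U) ≤ g*p + s^2 := by
  have hU0 : 0 ≤ U := le_trans (sq_nonneg c) hU
  have hgU : 0 < g + U := by linarith
  rw [div_le_iff₀ hgU]
  have hpt : p = 1 - t^2 := by linarith
  subst hpt
  rcases eq_or_lt_of_le hU with heq | hlt
  · have hs : s = c * t := by nlinarith [sq_nonneg (s - c*t)]
    subst hs; subst heq
    nlinarith [sq_nonneg (1 - t^2), sq_nonneg (c^2*t), mul_nonneg hg.le hp]
  · obtain ⟨w2, hw2, hU'⟩ : ∃ w2, 0 < w2 ∧ U = c^2 + w2 :=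
      ⟨U - c^2, by linarith, by ring⟩
    subst hU'
    have hC : 0 < w2*c^2 + (g+w2)^2 := by positivity
    have h1 := sq_nonneg ((w2*c^2 + (g+w2)^2)*(s - c*t) + w2*(g+(c^2+w2))*c*t)
    have h2 : 0 ≤ w2 * (c^2*g*t)^2 := by positivity
    have h3 : 0 ≤ (w2*c^2 + (g+w2)^2) * (g*(g+w2)) * (w2*(1 - t^2) - (s - c*t)^2) := by
      apply mul_nonneg (by positivity); linarith
    nlinarith [h1, h2, h3, mul_pos hC hw2]


/-- Smallest eigenvalue of a real symmetric matrix, characterized as the infimum of the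
Rayleigh quotient over the unit sphere. -/
noncomputable def lamMin {m : ℕ} (A : Matrix (Fin m) (Fin m) ℝ) : ℝ :=
  sInf {r | ∃ x : Fin m → ℝ, (∑ i, x i ^ 2) = 1 ∧ r = ∑ i, ∑ j, x i * A i j * x j}

/-- Simplified Ipsen-type bound: for `D = diag(λ₁, …, λ_n)` with
`λ₁ ≥ ⋯ ≥ λ_{n-1} > λ_n ≥ 0`, eigengap `g = λ_{n-1} - λ_n`, `u ∈ ℝⁿ` and `z = e_n`,
the smallest eigenvalue of `D + u uᵀ` is at least `λ_n + g (zᵀu)² / (g + ‖u‖²)`. -/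
theorem lamMin_rank_one_update_lower_bound {n : ℕ}
    (lam : Fin (n + 2) → ℝ) (hmono : Antitone lam)
    (hgap : lam (Fin.last (n + 1)) < lam ⟨n, by omega⟩)
    (hnn : 0 ≤ lam (Fin.last (n + 1)))
    (u : Fin (n + 2) → ℝ)
    (g : ℝ) (hg : g = lam ⟨n, by omega⟩ - lam (Fin.last (n + 1)))
    (z : Fin (n + 2) → ℝ) (hz : z = Pi.single (Fin.last (n + 1)) 1) :
    lam (Fin.last (n + 1)) + g * (∑ i, z i * u i) ^ 2 / (g + ∑ i, u i ^ 2)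
      ≤ lamMin (Matrix.diagonal lam + Matrix.vecMulVec u u) := by
  set L : Fin (n + 2) := Fin.last (n + 1) with hL
  have hgpos : 0 < g := by rw [hg]; linarith
  have hzu : (∑ i, z i * u i) = u L := by
    subst hz
    rw [Finset.sum_eq_single L]
    · simp
    · intro i _ hi; simp [Pi.single_apply, hi]
    · simp
  rw [hzu]
  apply le_csInf
  · refine ⟨_, Pi.single L 1, ?_, rfl⟩
    rw [Finset.sum_eq_single L]
    · simp
    · intro i _ hi; simp [Pi.single_apply, hi]
    · simp
  · rintro b ⟨x, hx, rfl⟩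
    -- quadratic form expansion
    have hquad : (∑ i, ∑ j, x i * (Matrix.diagonal lam + Matrix.vecMulVec u u) i j * x j)
        = (∑ i, lam i * x i ^ 2) + (∑ i, u i * x i) ^ 2 := by
      have hterm : ∀ i j : Fin (n+2), x i * (Matrix.diagonal lam + Matrix.vecMulVec u u) i j * x j
          = x i * Matrix.diagonal lam i j * x j + (x i * u i) * (u j * x j) := by
        intro i j; simp [Matrix.add_apply, Matrix.vecMulVec_apply]; ring
      simp only [hterm, Finset.sum_add_distrib]
      congr 1
      · refine Finset.sum_congr rfl fun i _ => ?_
        rw [Finset.sum_eq_single i]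
        · simp [Matrix.diagonal_apply_eq]; ring
        · intro j _ hj; simp [Matrix.diagonal_apply_ne' lam hj]
        · simp
      · rw [← Finset.sum_mul_sum]
        rw [sq]
        congr 1
        exact Finset.sum_congr rfl fun i _ => mul_comm _ _
    rw [hquad]
    set c : ℝ := u L
    set s : ℝ := ∑ i, u i * x i
    set t : ℝ := x L
    set p : ℝ := ∑ i ∈ Finset.univ.erase L, x i ^ 2 with hpdef
    set U : ℝ := ∑ i, u i ^ 2 with hUdef
    have hsplitx : t ^ 2 + p = 1 := by
      rw [hpdef, ← hx]
      exact Finset.add_sum_erase _ (fun i => x i ^ 2) (Finset.mem_univ L)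
    have hsplitu : c ^ 2 + (∑ i ∈ Finset.univ.erase L, u i ^ 2) = U := by
      rw [hUdef]
      exact Finset.add_sum_erase _ (fun i => u i ^ 2) (Finset.mem_univ L)
    have hsplits : c * t + (∑ i ∈ Finset.univ.erase L, u i * x i) = s := by
      exact Finset.add_sum_erase _ (fun i => u i * x i) (Finset.mem_univ L)
    have hp : 0 ≤ p := Finset.sum_nonneg fun i _ => sq_nonneg _
    have hcs : (s - c * t) ^ 2 ≤ (U - c ^ 2) * p := by
      have h2 : (∑ i ∈ Finset.univ.erase L, u i * x i) ^ 2
          ≤ (∑ i ∈ Finset.univ.erase L, u i ^ 2) * (∑ i ∈ Finset.univ.erase L, x i ^ 2) :=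
        Finset.sum_mul_sq_le_sq_mul_sq _ _ _
      rw [← hsplits]
      calc (c * t + (∑ i ∈ Finset.univ.erase L, u i * x i) - c * t) ^ 2
          = (∑ i ∈ Finset.univ.erase L, u i * x i) ^ 2 := by ring_nf
        _ ≤ (∑ i ∈ Finset.univ.erase L, u i ^ 2) * p := h2
        _ = (U - c ^ 2) * p := by rw [← hsplitu]; ring
    have hU : c ^ 2 ≤ U := by
      have : 0 ≤ ∑ i ∈ Finset.univ.erase L, u i ^ 2 :=
        Finset.sum_nonneg fun i _ => sq_nonneg _
      linarith
    have hdiag : lam L + g * p ≤ ∑ i, lam i * x i ^ 2 := by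
      have hlb : ∀ i ∈ Finset.univ.erase L, (lam L + g) * x i ^ 2 ≤ lam i * x i ^ 2 := by
        intro i hi
        have hine : i ≠ L := (Finset.mem_erase.1 hi).1
        have hvne : (i : ℕ) ≠ n + 1 := by
          intro h; exact hine (by apply Fin.ext; simp [hL, h])
        have hvlt := i.isLt
        have hile : i ≤ (⟨n, by omega⟩ : Fin (n + 2)) := by
          rw [Fin.le_def]; show (i : ℕ) ≤ n; omega
        have : lam L + g ≤ lam i := by
          have := hmono hile
          rw [hg]; linarith
        exact mul_le_mul_of_nonneg_right this (sq_nonneg _)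
      have hsum : ∑ i ∈ Finset.univ.erase L, (lam L + g) * x i ^ 2
          ≤ ∑ i ∈ Finset.univ.erase L, lam i * x i ^ 2 := Finset.sum_le_sum hlb
      have hsplit : (∑ i, lam i * x i ^ 2)
          = lam L * t ^ 2 + ∑ i ∈ Finset.univ.erase L, lam i * x i ^ 2 :=
        (Finset.add_sum_erase _ (fun i => lam i * x i ^ 2) (Finset.mem_univ L)).symm
      rw [hsplit, ← Finset.mul_sum] at *
      have ht2 : t ^ 2 = 1 - p := by linarith
      nlinarith [hgpos, hp]
    have hkey := key g U c t s p hgpos hU hp (by linarith) hcs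
    calc lam L + g * c ^ 2 / (g + U) ≤ lam L + (g * p + s ^ 2) := by linarith
      _ ≤ (∑ i, lam i * x i ^ 2) + s ^ 2 := by linarith
end

section
/- Let S ∈ ℝ^{N×N} be symmetric with eigenvalues λ_1 ≥ ⋯ ≥ λ_N and suppose λ_n > λ_{n+1}. If Ω ∈ ℝ^{N×n} satisfies ΩᵀΩ = I_n and trace(Ωᵀ S Ω) = λ_1 + ⋯ + λ_n, then Ω = U Q for some orthogonal Q ∈ ℝ^{n×n}, where U has as columns orthonormal eigenvectors of the n largest eigenvalues of S. -/
open Matrix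

/-- Eigenvalues of a Hermitian (real symmetric) matrix, ordered decreasingly. -/
noncomputable def eigsDesc {n : ℕ} {A : Matrix (Fin n) (Fin n) ℝ}
    (hA : A.IsHermitian) : Fin n → ℝ :=
  fun i => (hA.eigenvalues ∘ Tuple.sort hA.eigenvalues) i.rev

private lemma filter_lt_eq_map' {N n : ℕ} (hn : n ≤ N) :
    Finset.univ.filter (fun k : Fin N => (k : ℕ) < n)
      = (Finset.univ : Finset (Fin n)).map (Fin.castLEEmb hn) := by
  ext x
  simp only [Finset.mem_filter, Finset.mem_univ, true_and, Finset.mem_map,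
    Fin.castLEEmb_apply]
  constructor
  · intro hx; exact ⟨⟨x, hx⟩, rfl⟩
  · rintro ⟨j, rfl⟩; exact j.isLt

private lemma sum_filter_lt' {N n : ℕ} (hn : n ≤ N) (f : Fin N → ℝ) :
    ∑ k ∈ Finset.univ.filter (fun k : Fin N => (k : ℕ) < n), f k
      = ∑ j : Fin n, f (Fin.castLE hn j) := by
  rw [filter_lt_eq_map' hn, Finset.sum_map]
  rfl

private lemma sum_castLE' {N n : ℕ} (hn : n ≤ N) (f : Fin N → ℝ)
    (h0 : ∀ k : Fin N, n ≤ (k : ℕ) → f k = 0) :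
    ∑ k : Fin N, f k = ∑ j : Fin n, f (Fin.castLE hn j) := by
  rw [← sum_filter_lt' hn f]
  symm
  apply Finset.sum_subset (Finset.filter_subset _ _)
  intro x _ hx
  simp only [Finset.mem_filter, Finset.mem_univ, true_and] at hx
  exact h0 x (le_of_not_gt hx)

set_option maxHeartbeats 2000000 in
/-- Uniqueness part of the Ky Fan theorem: if `S` is symmetric with eigengap
`λ_n > λ_{n+1}` and `Ω` with orthonormal columns attains
`trace(Ωᵀ S Ω) = λ₁ + ⋯ + λ_n`, then `Ω = U Q` for an orthogonal `Q`, where the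
columns of `U` are orthonormal eigenvectors of the `n` largest eigenvalues of `S`. -/
theorem ky_fan_maximizer_structure {N n : ℕ} (hn0 : 0 < n) (hn : n < N)
    (S : Matrix (Fin N) (Fin N) ℝ) (hS : S.IsHermitian)
    (hgap : eigsDesc hS ⟨n, hn⟩ < eigsDesc hS ⟨n - 1, by omega⟩)
    (U : Matrix (Fin N) (Fin n) ℝ) (hUo : Uᵀ * U = 1)
    (hUe : ∀ j : Fin n, S.mulVec (fun i => U i j)
      = eigsDesc hS (Fin.castLE hn.le j) • fun i => U i j)
    (Ω : Matrix (Fin N) (Fin n) ℝ) (hΩo : Ωᵀ * Ω = 1)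
    (hΩmax : Matrix.trace (Ωᵀ * S * Ω) = ∑ j : Fin n, eigsDesc hS (Fin.castLE hn.le j)) :
    ∃ Q : Matrix (Fin n) (Fin n) ℝ, Qᵀ * Q = 1 ∧ Q * Qᵀ = 1 ∧ Ω = U * Q := by
  set lam : Fin N → ℝ := eigsDesc hS with hlamdef
  set τ : Equiv.Perm (Fin N) := Fin.revPerm.trans (Tuple.sort hS.eigenvalues) with hτdef
  have hlam : ∀ k : Fin N, lam k = hS.eigenvalues (τ k) := fun _ => rfl
  have hanti : Antitone lam := by
    intro i j hij
    exact Tuple.monotone_sort hS.eigenvalues (Fin.rev_le_rev.mpr hij)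
  set Vm : Matrix (Fin N) (Fin N) ℝ := (hS.eigenvectorUnitary : Matrix (Fin N) (Fin N) ℝ)
    with hVmdef
  have hstar : star Vm = Vmᵀ := by
    ext i j; simp [Matrix.star_apply]
  have hVtV : Vmᵀ * Vm = 1 := by
    rw [← hstar]
    exact Matrix.mem_unitaryGroup_iff'.mp hS.eigenvectorUnitary.2
  have hspec : S = Vm * Matrix.diagonal hS.eigenvalues * Vmᵀ := by
    have h := hS.spectral_theorem
    rw [RCLike.ofReal_real_eq_id] at h
    rw [← hstar]
    exact h
  have hSV : S * Vm = Vm * Matrix.diagonal hS.eigenvalues := by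
    conv_lhs => rw [hspec]
    rw [Matrix.mul_assoc, hVtV, Matrix.mul_one]
  set W : Matrix (Fin N) (Fin N) ℝ := Vm.submatrix id τ with hWdef
  have hSW : S * W = W * Matrix.diagonal lam := by
    ext r k
    have h1 := congrFun (congrFun hSV r) (τ k)
    rw [Matrix.mul_apply, Matrix.mul_diagonal] at h1
    rw [Matrix.mul_apply, Matrix.mul_diagonal, hlam k]
    simp only [hWdef, Matrix.submatrix_apply, id_eq]
    exact h1
  have hWtW : Wᵀ * W = 1 := by
    ext k l
    have h1 := congrFun (congrFun hVtV (τ k)) (τ l)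
    rw [Matrix.mul_apply] at h1
    simp only [Matrix.transpose_apply] at h1
    rw [Matrix.mul_apply]
    simp only [Matrix.transpose_apply, hWdef, Matrix.submatrix_apply, id_eq]
    rw [h1]
    simp [Matrix.one_apply, τ.injective.eq_iff]
  have hWWt : W * Wᵀ = 1 := mul_eq_one_comm.mp hWtW
  have hSdec : S = W * Matrix.diagonal lam * Wᵀ := by
    calc S = S * (W * Wᵀ) := by rw [hWWt, Matrix.mul_one]
    _ = (S * W) * Wᵀ := by rw [Matrix.mul_assoc]
    _ = W * Matrix.diagonal lam * Wᵀ := by rw [hSW]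
  -- the coefficient matrix of Ω in the eigenbasis
  set Zb : Matrix (Fin N) (Fin n) ℝ := Wᵀ * Ω with hZdef
  have hZtZ : Zbᵀ * Zb = 1 := by
    rw [hZdef, Matrix.transpose_mul, Matrix.transpose_transpose, Matrix.mul_assoc,
      ← Matrix.mul_assoc W, hWWt, Matrix.one_mul, hΩo]
  have hWZ : W * Zb = Ω := by
    rw [hZdef, ← Matrix.mul_assoc, hWWt, Matrix.one_mul]
  set c : Fin N → ℝ := fun k => ∑ j : Fin n, (Zb k j) ^ 2 with hcdef
  have hc0 : ∀ k, 0 ≤ c k := fun k => Finset.sum_nonneg fun j _ => sq_nonneg _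
  have hcsum : ∑ k : Fin N, c k = (n : ℝ) := by
    have h1 : ∑ k : Fin N, c k = Matrix.trace (Zbᵀ * Zb) := by
      rw [Matrix.trace]
      simp only [hcdef, Matrix.diag_apply, Matrix.mul_apply, Matrix.transpose_apply, sq]
      rw [Finset.sum_comm]
    rw [h1, hZtZ, Matrix.trace_one]
    simp
  have hc1 : ∀ k, c k ≤ 1 := by
    intro k
    set M : Matrix (Fin N) (Fin N) ℝ := Zb * Zbᵀ with hMdef
    have hMM : M * M = M := by
      rw [hMdef, Matrix.mul_assoc, ← Matrix.mul_assoc Zbᵀ, hZtZ, Matrix.one_mul]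
    have hMsym : ∀ a b, M a b = M b a := by
      intro a b
      simp only [hMdef, Matrix.mul_apply, Matrix.transpose_apply]
      exact Finset.sum_congr rfl fun j _ => mul_comm _ _
    have hck : c k = M k k := by
      simp only [hcdef, hMdef, Matrix.mul_apply, Matrix.transpose_apply, sq]
    have hMkk : M k k = ∑ l, (M k l) ^ 2 := by
      have h2 := congrFun (congrFun hMM k) k
      rw [Matrix.mul_apply] at h2
      rw [← h2]
      apply Finset.sum_congr rfl
      intro l _
      rw [sq, hMsym l k]
    have h3 : (M k k) ^ 2 ≤ ∑ l, (M k l) ^ 2 :=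
      Finset.single_le_sum (f := fun l => (M k l) ^ 2) (fun l _ => sq_nonneg _)
        (Finset.mem_univ k)
    nlinarith [hMkk, h3, hck]
  -- trace identity
  have htr : ∑ k : Fin N, lam k * c k = ∑ j : Fin n, lam (Fin.castLE hn.le j) := by
    rw [← hΩmax]
    have hform : Ωᵀ * S * Ω = Zbᵀ * (Matrix.diagonal lam * Zb) := by
      conv_rhs => rw [hZdef]
      rw [hSdec]
      simp only [Matrix.transpose_mul, Matrix.transpose_transpose, Matrix.mul_assoc]
    rw [hform]
    have h1 : Matrix.trace (Zbᵀ * (Matrix.diagonal lam * Zb))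
        = ∑ j : Fin n, ∑ k : Fin N, Zb k j * (lam k * Zb k j) := by
      rw [Matrix.trace]
      apply Finset.sum_congr rfl
      intro j _
      rw [Matrix.diag_apply, Matrix.mul_apply]
      apply Finset.sum_congr rfl
      intro k _
      rw [Matrix.transpose_apply, Matrix.diagonal_mul]
    rw [h1, Finset.sum_comm]
    apply Finset.sum_congr rfl
    intro k _
    simp only [hcdef, Finset.mul_sum]
    apply Finset.sum_congr rfl
    intro j _
    ring
  -- equality analysis: coefficients below the gap vanish
  set a : ℝ := lam ⟨n - 1, by omega⟩ with hadef
  set b : ℝ := lam ⟨n, hn⟩ with hbdef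
  have hba : b < a := hgap
  have ha_le : ∀ j : Fin n, a ≤ lam (Fin.castLE hn.le j) := by
    intro j
    apply hanti
    rw [Fin.le_def]
    show (j : ℕ) ≤ n - 1
    have := j.isLt
    omega
  have hb_ge : ∀ k : Fin N, n ≤ (k : ℕ) → lam k ≤ b := by
    intro k hk
    apply hanti
    rw [Fin.le_def]
    show n ≤ (k : ℕ)
    exact hk
  have hZ0 : ∀ (k : Fin N), n ≤ (k : ℕ) → ∀ j : Fin n, Zb k j = 0 := by
    have hsplit := Finset.sum_filter_add_sum_filter_not Finset.univ
      (fun k : Fin N => (k : ℕ) < n) (fun k => lam k * c k)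
    have hsplit2 := Finset.sum_filter_add_sum_filter_not Finset.univ
      (fun k : Fin N => (k : ℕ) < n) c
    set F := Finset.univ.filter (fun k : Fin N => (k : ℕ) < n) with hFdef
    set Fc := Finset.univ.filter (fun k : Fin N => ¬ (k : ℕ) < n) with hFcdef
    have hmemFc : ∀ k ∈ Fc, n ≤ (k : ℕ) := by
      intro k hk
      simp only [hFcdef, Finset.mem_filter, Finset.mem_univ, true_and] at hk
      omega
    have hT0 : 0 ≤ ∑ k ∈ Fc, c k := Finset.sum_nonneg fun k _ => hc0 k
    have hC1 : ∑ k ∈ F, c k = (n : ℝ) - ∑ k ∈ Fc, c k := by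
      rw [hcsum] at hsplit2
      linarith
    have hcard : ∑ _k ∈ F, a = (n : ℝ) * a := by
      rw [hFdef, filter_lt_eq_map' hn.le, Finset.sum_const, Finset.card_map,
        Finset.card_univ, Fintype.card_fin, nsmul_eq_mul]
    have hFlam : ∑ k ∈ F, lam k = ∑ j : Fin n, lam (Fin.castLE hn.le j) := by
      rw [hFdef, sum_filter_lt' hn.le lam]
    have hA1 : ∑ k ∈ F, lam k * c k
        ≤ ∑ j : Fin n, lam (Fin.castLE hn.le j) + a * ((n : ℝ) - ∑ k ∈ Fc, c k) - a * n := by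
      have hbd : ∑ k ∈ F, lam k * c k ≤ ∑ k ∈ F, (lam k + a * c k - a) := by
        apply Finset.sum_le_sum
        intro k hk
        simp only [hFdef, Finset.mem_filter, Finset.mem_univ, true_and] at hk
        have h1 : a ≤ lam k := by
          apply hanti
          rw [Fin.le_def]
          show (k : ℕ) ≤ n - 1
          omega
        have h2 := hc1 k
        nlinarith [hc0 k]
      have heq : ∑ k ∈ F, (lam k + a * c k - a)
          = ∑ j : Fin n, lam (Fin.castLE hn.le j) + a * ((n : ℝ) - ∑ k ∈ Fc, c k) - a * n := by
        rw [Finset.sum_sub_distrib, Finset.sum_add_distrib, ← Finset.mul_sum, hC1,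
          hcard, hFlam]
        ring
      linarith
    have hA2 : ∑ k ∈ Fc, lam k * c k ≤ b * ∑ k ∈ Fc, c k := by
      rw [Finset.mul_sum]
      apply Finset.sum_le_sum
      intro k hk
      exact mul_le_mul_of_nonneg_right (hb_ge k (hmemFc k hk)) (hc0 k)
    have hLeq : ∑ k ∈ F, lam k * c k + ∑ k ∈ Fc, lam k * c k
        = ∑ j : Fin n, lam (Fin.castLE hn.le j) := by
      rw [hsplit, htr]
    set T := ∑ k ∈ Fc, c k with hTdef
    have h8 : 0 ≤ (b - a) * T := by
      have e1 : a * ((n : ℝ) - T) - a * n = -(a * T) := by ring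
      have e2 : (b - a) * T = b * T - a * T := by ring
      linarith [hA1, hA2, hLeq]
    have hT1 : T ≤ 0 := by nlinarith [h8, hba, hT0]
    have hTzero : T = 0 := le_antisymm hT1 hT0
    have hcFc : ∀ k ∈ Fc, c k = 0 :=
      (Finset.sum_eq_zero_iff_of_nonneg (fun k _ => hc0 k)).mp hTzero
    intro k hk j
    have hck : c k = 0 := hcFc k (by simp [hFcdef]; omega)
    have h4 := (Finset.sum_eq_zero_iff_of_nonneg (fun j _ => sq_nonneg (Zb k j))).mp hck
      j (Finset.mem_univ j)
    exact pow_eq_zero_iff (n := 2) (by norm_num) |>.mp h4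
  -- the coefficient matrix of U in the eigenbasis also vanishes below the gap
  set Yb : Matrix (Fin N) (Fin n) ℝ := Wᵀ * U with hYdef
  have hYtY : Ybᵀ * Yb = 1 := by
    rw [hYdef, Matrix.transpose_mul, Matrix.transpose_transpose, Matrix.mul_assoc,
      ← Matrix.mul_assoc W, hWWt, Matrix.one_mul, hUo]
  have hWY : W * Yb = U := by
    rw [hYdef, ← Matrix.mul_assoc, hWWt, Matrix.one_mul]
  have hSsym : ∀ r s, S r s = S s r := by
    intro r s
    conv_lhs => rw [← hS]
    simp [Matrix.conjTranspose_apply]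
  have hY0 : ∀ (k : Fin N), n ≤ (k : ℕ) → ∀ j : Fin n, Yb k j = 0 := by
    intro k hk j
    have hcol : ∀ r, lam k * W r k = ∑ s, S r s * W s k := by
      intro r
      have h := congrFun (congrFun hSW r) k
      rw [Matrix.mul_apply, Matrix.mul_diagonal] at h
      rw [mul_comm (lam k) (W r k), ← h]
    have h5 : ∀ s, ∑ r, S s r * U r j = lam (Fin.castLE hn.le j) * U s j := by
      intro s
      have h6 := congrFun (hUe j) s
      simpa [Matrix.mulVec, dotProduct] using h6
    have hkey : lam k * Yb k j = lam (Fin.castLE hn.le j) * Yb k j := by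
      calc lam k * Yb k j = ∑ r, (lam k * W r k) * U r j := by
            rw [hYdef, Matrix.mul_apply, Finset.mul_sum]
            apply Finset.sum_congr rfl
            intro r _
            rw [Matrix.transpose_apply]
            ring
        _ = ∑ r, (∑ s, S r s * W s k) * U r j := by
            apply Finset.sum_congr rfl
            intro r _
            rw [hcol r]
        _ = ∑ s, W s k * (∑ r, S s r * U r j) := by
            simp only [Finset.sum_mul, Finset.mul_sum]
            rw [Finset.sum_comm]
            apply Finset.sum_congr rfl
            intro s _
            apply Finset.sum_congr rfl
            intro r _
            rw [hSsym r s]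
            ring
        _ = ∑ s, W s k * (lam (Fin.castLE hn.le j) * U s j) := by
            apply Finset.sum_congr rfl
            intro s _
            rw [h5 s]
        _ = lam (Fin.castLE hn.le j) * Yb k j := by
            rw [hYdef, Matrix.mul_apply, Finset.mul_sum]
            apply Finset.sum_congr rfl
            intro s _
            rw [Matrix.transpose_apply]
            ring
    have hne : lam k ≠ lam (Fin.castLE hn.le j) :=
      ne_of_lt (by linarith [hb_ge k hk, ha_le j, hba])
    have h7 := sub_eq_zero.mpr hkey
    rw [← sub_mul] at h7
    rcases mul_eq_zero.mp h7 with h | h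
    · exact absurd (sub_eq_zero.mp h) hne
    · exact h
  -- restricted square blocks
  set Y' : Matrix (Fin n) (Fin n) ℝ := Matrix.of fun k j => Yb (Fin.castLE hn.le k) j
    with hY'def
  set Z' : Matrix (Fin n) (Fin n) ℝ := Matrix.of fun k j => Zb (Fin.castLE hn.le k) j
    with hZ'def
  have hY'tY' : Y'ᵀ * Y' = 1 := by
    ext i j
    have h1 : (Y'ᵀ * Y') i j
        = ∑ k : Fin n, Yb (Fin.castLE hn.le k) i * Yb (Fin.castLE hn.le k) j := by
      rw [Matrix.mul_apply]
      rfl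
    have h2 : (Ybᵀ * Yb) i j = ∑ k : Fin N, Yb k i * Yb k j := by
      rw [Matrix.mul_apply]
      rfl
    rw [h1, ← sum_castLE' hn.le (fun k => Yb k i * Yb k j)
      (fun k hk => by show Yb k i * Yb k j = 0; rw [hY0 k hk i, zero_mul]), ← h2, hYtY]
  have hY'Y't : Y' * Y'ᵀ = 1 := mul_eq_one_comm.mp hY'tY'
  -- key projection identity
  have hYbtZb : Ybᵀ * Zb = Y'ᵀ * Z' := by
    ext i j
    have h1 : (Y'ᵀ * Z') i j
        = ∑ k : Fin n, Yb (Fin.castLE hn.le k) i * Zb (Fin.castLE hn.le k) j := by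
      rw [Matrix.mul_apply]
      rfl
    have h2 : (Ybᵀ * Zb) i j = ∑ k : Fin N, Yb k i * Zb k j := by
      rw [Matrix.mul_apply]
      rfl
    rw [h1, h2]
    exact sum_castLE' hn.le (fun k => Yb k i * Zb k j)
      (fun k hk => by show Yb k i * Zb k j = 0; rw [hY0 k hk i, zero_mul])
  have hproj : Yb * (Ybᵀ * Zb) = Zb := by
    rw [hYbtZb]
    ext k j
    rcases lt_or_ge (k : ℕ) n with hk | hk
    · have h1 : (Yb * (Y'ᵀ * Z')) k j = (Y' * (Y'ᵀ * Z')) ⟨(k : ℕ), hk⟩ j := rfl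
      have h2 : Z' ⟨(k : ℕ), hk⟩ j = Zb k j := rfl
      rw [h1, ← Matrix.mul_assoc, hY'Y't, Matrix.one_mul, h2]
    · have h1 : (Yb * (Y'ᵀ * Z')) k j = 0 := by
        rw [Matrix.mul_apply]
        apply Finset.sum_eq_zero
        intro i _
        rw [hY0 k hk i, zero_mul]
      rw [h1, hZ0 k hk j]
  -- conclude
  have hUUtΩ : U * (Uᵀ * Ω) = Ω := by
    have hUt : Uᵀ * Ω = Ybᵀ * Zb := by
      conv_lhs => rw [← hWY]
      rw [Matrix.transpose_mul, Matrix.mul_assoc, ← hZdef]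
    rw [hUt, ← hWY, Matrix.mul_assoc, hproj, hWZ]
  refine ⟨Uᵀ * Ω, ?_, ?_, ?_⟩
  · rw [Matrix.transpose_mul, Matrix.transpose_transpose, Matrix.mul_assoc, hUUtΩ, hΩo]
  · apply mul_eq_one_comm.mp
    rw [Matrix.transpose_mul, Matrix.transpose_transpose, Matrix.mul_assoc, hUUtΩ, hΩo]
  · exact hUUtΩ.symm
end

section
/- Let U ∈ ℝ^{N×n} have orthonormal columns, and let P ∈ ℝ^{N×p} (p ≥ n) be a selection matrix such that PᵀU has full column rank n. Then for every y ∈ ℝ^N, the oblique projection error satisfies ‖y − U(PᵀU)⁺Pᵀ y‖₂ ≤ ‖(PᵀU)⁺‖₂ · ‖(I − UUᵀ) y‖₂ when ‖(PᵀU)⁺‖₂ ≥ 1, and more generally ‖U(PᵀU)⁺Pᵀ w‖₂ ≤ ‖(PᵀU)⁺‖₂ ‖w‖₂ for all w ∈ ℝ^N. -/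
open Matrix

/-- Euclidean norm of a vector. -/
noncomputable def enorm₂ {a : ℕ} (v : Fin a → ℝ) : ℝ := Real.sqrt (∑ i, v i ^ 2)

/-- Spectral (operator 2-) norm of a matrix. -/
noncomputable def specNorm {a b : ℕ} (M : Matrix (Fin a) (Fin b) ℝ) : ℝ :=
  sSup {r | ∃ x : Fin b → ℝ, enorm₂ x = 1 ∧ r = enorm₂ (M.mulVec x)}

/-- Moore–Penrose pseudoinverse of a full-column-rank matrix. -/
noncomputable def pinv {a b : ℕ} (M : Matrix (Fin a) (Fin b) ℝ) :
    Matrix (Fin b) (Fin a) ℝ := (Mᵀ * M)⁻¹ * Mᵀ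

lemma enorm₂_nonneg {a : ℕ} (v : Fin a → ℝ) : 0 ≤ enorm₂ v := Real.sqrt_nonneg _

lemma enorm₂_sq {a : ℕ} (v : Fin a → ℝ) : enorm₂ v ^ 2 = ∑ i, v i ^ 2 :=
  Real.sq_sqrt (Finset.sum_nonneg fun _ _ => sq_nonneg _)

lemma enorm₂_smul {a : ℕ} (t : ℝ) (v : Fin a → ℝ) : enorm₂ (t • v) = |t| * enorm₂ v := by
  unfold enorm₂
  rw [← Real.sqrt_sq_eq_abs, ← Real.sqrt_mul (sq_nonneg t), Finset.mul_sum]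
  congr 1
  refine Finset.sum_congr rfl fun i _ => ?_
  simp [smul_eq_mul]
  ring

lemma enorm₂_zero_iff {a : ℕ} (v : Fin a → ℝ) (h : enorm₂ v = 0) : v = 0 := by
  unfold enorm₂ at h
  have h2 : (∑ i, v i ^ 2) = 0 :=
    Real.sqrt_eq_zero (Finset.sum_nonneg fun _ _ => sq_nonneg _) |>.mp h
  funext i
  have := (Finset.sum_eq_zero_iff_of_nonneg
    (fun i _ => sq_nonneg (v i))).mp h2 i (Finset.mem_univ i)
  exact pow_eq_zero_iff (by norm_num) |>.mp this

lemma mulVec_enorm₂_bound {a b : ℕ} (A : Matrix (Fin a) (Fin b) ℝ) (v : Fin b → ℝ) :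
    enorm₂ (A.mulVec v) ≤ Real.sqrt (∑ i, ∑ j, A i j ^ 2) * enorm₂ v := by
  unfold enorm₂
  rw [← Real.sqrt_mul (show (0:ℝ) ≤ ∑ i, ∑ j, A i j ^ 2 from Finset.sum_nonneg fun _ _ => Finset.sum_nonneg fun _ _ => sq_nonneg _)]
  apply Real.sqrt_le_sqrt
  rw [Finset.sum_mul]
  refine Finset.sum_le_sum fun i _ => ?_
  have : A.mulVec v i = ∑ j, A i j * v j := by
    simp [Matrix.mulVec, dotProduct]
  rw [this]
  exact Finset.sum_mul_sq_le_sq_mul_sq _ _ _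

lemma specNorm_spec {a b : ℕ} (hb : 0 < b) (A : Matrix (Fin a) (Fin b) ℝ) :
    0 ≤ specNorm A ∧ ∀ v : Fin b → ℝ, enorm₂ (A.mulVec v) ≤ specNorm A * enorm₂ v := by
  set S := {r | ∃ x : Fin b → ℝ, enorm₂ x = 1 ∧ r = enorm₂ (A.mulVec x)} with hS
  have hbdd : BddAbove S := by
    refine ⟨Real.sqrt (∑ i, ∑ j, A i j ^ 2), fun r hr => ?_⟩
    obtain ⟨x, hx1, rfl⟩ := hr
    calc enorm₂ (A.mulVec x) ≤ Real.sqrt (∑ i, ∑ j, A i j ^ 2) * enorm₂ x := mulVec_enorm₂_bound A x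
    _ = Real.sqrt (∑ i, ∑ j, A i j ^ 2) := by rw [hx1, mul_one]
  have hne : S.Nonempty := by
    refine ⟨enorm₂ (A.mulVec (fun j => if j = ⟨0, hb⟩ then 1 else 0)),
      (fun j => if j = ⟨0, hb⟩ then 1 else 0), ?_, rfl⟩
    unfold enorm₂
    rw [show (∑ j, (if j = (⟨0, hb⟩ : Fin b) then (1:ℝ) else 0) ^ 2) = 1 by
      simp [ite_pow]]
    exact Real.sqrt_one
  have hmem : ∀ x : Fin b → ℝ, enorm₂ x = 1 → enorm₂ (A.mulVec x) ≤ specNorm A := by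
    intro x hx
    exact le_csSup hbdd ⟨x, hx, rfl⟩
  have hc0 : 0 ≤ specNorm A := by
    obtain ⟨r, x, hx, rfl⟩ := hne
    exact le_trans (enorm₂_nonneg _) (hmem x hx)
  refine ⟨hc0, fun v => ?_⟩
  by_cases hv : enorm₂ v = 0
  · rw [enorm₂_zero_iff v hv]
    have h0a : enorm₂ (0 : Fin b → ℝ) = 0 := by simp [enorm₂]
    have h0b : enorm₂ (A.mulVec (0 : Fin b → ℝ)) = 0 := by
      simp [enorm₂, Matrix.mulVec_zero]
    rw [h0a, h0b, mul_zero]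
  · have hvpos : 0 < enorm₂ v := lt_of_le_of_ne (enorm₂_nonneg v) (Ne.symm hv)
    have hx : enorm₂ ((enorm₂ v)⁻¹ • v) = 1 := by
      rw [enorm₂_smul, abs_of_pos (inv_pos.mpr hvpos), inv_mul_cancel₀ hv]
    have key := hmem _ hx
    rw [Matrix.mulVec_smul, enorm₂_smul, abs_of_pos (inv_pos.mpr hvpos)] at key
    calc enorm₂ (A.mulVec v) = enorm₂ v * ((enorm₂ v)⁻¹ * enorm₂ (A.mulVec v)) := by
          field_simp
    _ ≤ enorm₂ v * specNorm A := mul_le_mul_of_nonneg_left key (le_of_lt hvpos)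
    _ = specNorm A * enorm₂ v := mul_comm _ _

lemma dot_mulVec_left {a b : ℕ} (A : Matrix (Fin a) (Fin b) ℝ) (v : Fin b → ℝ) (u : Fin a → ℝ) :
    (A.mulVec v) ⬝ᵥ u = v ⬝ᵥ (Aᵀ.mulVec u) := by
  rw [dotProduct_comm, dotProduct_mulVec, ← transpose_transpose A, vecMul_transpose,
    transpose_transpose, dotProduct_comm]

lemma enorm₂_eq_sqrt_dot {k : ℕ} (v : Fin k → ℝ) : enorm₂ v = Real.sqrt (v ⬝ᵥ v) := by
  unfold enorm₂
  congr 1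
  simp [dotProduct, sq]

lemma cs_finset {k : ℕ} (S : Finset (Fin k)) (f g : Fin k → ℝ) :
    (∑ i ∈ S, f i * g i) ^ 2 ≤ (∑ i ∈ S, f i * f i) * (∑ i ∈ S, g i * g i) := by
  have h := Finset.sum_mul_sq_le_sq_mul_sq S f g
  simpa only [pow_two] using h

lemma dot_eq_sum {k : ℕ} (v w : Fin k → ℝ) : v ⬝ᵥ w = ∑ i, v i * w i := rfl

lemma dot_self_nonneg {k : ℕ} (v : Fin k → ℝ) : 0 ≤ v ⬝ᵥ v :=
  Finset.sum_nonneg fun i _ => mul_self_nonneg _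

/-- Error and amplification bounds for the oblique (gappy POD / ODEIM) projection
`U (PᵀU)⁺ Pᵀ`: if `‖(PᵀU)⁺‖₂ ≥ 1` then the projection error of any `y` is bounded by
`‖(PᵀU)⁺‖₂ ‖(I − U Uᵀ) y‖₂`, and in general `‖U (PᵀU)⁺ Pᵀ w‖₂ ≤ ‖(PᵀU)⁺‖₂ ‖w‖₂`. -/
theorem oblique_projection_bounds {N p n : ℕ} (hn : n ≤ p)
    (U : Matrix (Fin N) (Fin n) ℝ) (hU : Uᵀ * U = 1)
    (φ : Fin p → Fin N) (hφ : Function.Injective φ)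
    (P : Matrix (Fin N) (Fin p) ℝ)
    (hP : P = Matrix.of fun i j => if i = φ j then (1 : ℝ) else 0)
    (hrank : (Pᵀ * U).rank = n) :
    ((1 : ℝ) ≤ specNorm (pinv (Pᵀ * U)) →
      ∀ y : Fin N → ℝ,
        enorm₂ (y - (U * pinv (Pᵀ * U) * Pᵀ).mulVec y)
          ≤ specNorm (pinv (Pᵀ * U)) * enorm₂ ((1 - U * Uᵀ).mulVec y)) ∧
    ∀ w : Fin N → ℝ,
      enorm₂ ((U * pinv (Pᵀ * U) * Pᵀ).mulVec w)
        ≤ specNorm (pinv (Pᵀ * U)) * enorm₂ w := by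
  rcases Nat.eq_zero_or_pos p with hp | hp
  · -- degenerate case p = 0
    subst hp
    have hspec : specNorm (pinv (Pᵀ * U)) = 0 := by
      unfold specNorm
      have hempty : {r | ∃ x : Fin 0 → ℝ, enorm₂ x = 1 ∧
          r = enorm₂ ((pinv (Pᵀ * U)).mulVec x)} = ∅ := by
        ext r
        simp only [Set.mem_setOf_eq, Set.mem_empty_iff_false, iff_false, not_exists]
        intro x hcontra
        have hx0 : enorm₂ x = 0 := by simp [enorm₂]
        rw [hx0] at hcontra
        norm_num at hcontra
      rw [hempty, Real.sSup_empty]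
    have hzero : U * pinv (Pᵀ * U) * Pᵀ = 0 := by
      ext i j
      simp [Matrix.mul_apply]
    constructor
    · intro h1
      rw [hspec] at h1
      linarith
    · intro w
      rw [hzero, hspec, Matrix.zero_mulVec, zero_mul]
      simp [enorm₂]
  · -- main case p > 0
    set M : Matrix (Fin p) (Fin n) ℝ := Pᵀ * U with hM
    set B := pinv M with hB
    set c := specNorm B with hc
    obtain ⟨hc0, hcb⟩ := specNorm_spec hp B
    rw [← hc] at hc0
    simp only [← hc] at hcb
    have hBdef : B = (Mᵀ * M)⁻¹ * Mᵀ := hB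
    clear_value M B c
    -- invertibility of MᵀM
    have hdet : IsUnit (Mᵀ * M).det := by
      have hr : (Mᵀ * M).rank = n := by rw [Matrix.rank_transpose_mul_self]; exact hrank
      have htop : LinearMap.range (Mᵀ * M).mulVecLin = ⊤ := by
        apply Submodule.eq_top_of_finrank_eq
        have hfr : Module.finrank ℝ (Fin n → ℝ) = n := by simp
        rw [hfr]
        exact hr
      have hsurj : Function.Surjective (Mᵀ * M).mulVec := by
        intro v
        obtain ⟨u, hu⟩ := LinearMap.range_eq_top.mp htop v
        exact ⟨u, by rwa [Matrix.mulVecLin_apply] at hu⟩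
      exact (Matrix.isUnit_iff_isUnit_det _).mp (Matrix.mulVec_surjective_iff_isUnit.mp hsurj)
    have hinv1 : (Mᵀ * M)⁻¹ * (Mᵀ * M) = 1 := Matrix.nonsing_inv_mul _ hdet
    have hinv2 : (Mᵀ * M) * (Mᵀ * M)⁻¹ = 1 := Matrix.mul_nonsing_inv _ hdet
    have hBM : B * M = 1 := by
      rw [hBdef, Matrix.mul_assoc, hinv1]
    -- selection structure
    have hPt : ∀ v : Fin N → ℝ, Pᵀ.mulVec v = fun j => v (φ j) := by
      intro v
      funext j
      simp [hP, Matrix.mulVec, dotProduct, ite_mul]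
    set T : Finset (Fin N) := Finset.image φ Finset.univ with hT
    clear_value T
    have hsel : ∀ v w : Fin N → ℝ,
        (Pᵀ.mulVec v) ⬝ᵥ (Pᵀ.mulVec w) = ∑ i ∈ T, v i * w i := by
      intro v w
      rw [hPt, hPt, hT]
      rw [Finset.sum_image (fun x _ y _ h => hφ h)]
      rfl
    -- isometry of U
    have hUiso : ∀ x : Fin n → ℝ, (U.mulVec x) ⬝ᵥ (U.mulVec x) = x ⬝ᵥ x := by
      intro x
      rw [dot_mulVec_left, Matrix.mulVec_mulVec, hU, Matrix.one_mulVec]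
    have hUe : ∀ x : Fin n → ℝ, enorm₂ (U.mulVec x) = enorm₂ x := by
      intro x
      rw [enorm₂_eq_sqrt_dot, enorm₂_eq_sqrt_dot, hUiso]
    -- Pᵀ contracts
    have hPle : ∀ w : Fin N → ℝ, enorm₂ (Pᵀ.mulVec w) ≤ enorm₂ w := by
      intro w
      rw [enorm₂_eq_sqrt_dot, enorm₂_eq_sqrt_dot]
      apply Real.sqrt_le_sqrt
      rw [hsel]
      exact Finset.sum_le_sum_of_subset_of_nonneg (Finset.subset_univ _)
        (fun i _ _ => mul_self_nonneg _)
    have part2 : ∀ w : Fin N → ℝ,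
        enorm₂ ((U * B * Pᵀ).mulVec w) ≤ c * enorm₂ w := by
      intro w
      have h1 : (U * B * Pᵀ).mulVec w = U.mulVec (B.mulVec (Pᵀ.mulVec w)) := by
        rw [Matrix.mulVec_mulVec, Matrix.mulVec_mulVec]
      rw [h1, hUe]
      calc enorm₂ (B.mulVec (Pᵀ.mulVec w)) ≤ c * enorm₂ (Pᵀ.mulVec w) := hcb _
      _ ≤ c * enorm₂ w := mul_le_mul_of_nonneg_left (hPle w) hc0
    refine ⟨?_, part2⟩
    intro hc1 y
    set z := (1 - U * Uᵀ).mulVec y with hz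
    set x := B.mulVec (Pᵀ.mulVec z) with hx
    clear_value z x
    have hUz : Uᵀ.mulVec z = 0 := by
      rw [hz, Matrix.mulVec_mulVec]
      have h0 : Uᵀ * (1 - U * Uᵀ) = 0 := by
        rw [Matrix.mul_sub, Matrix.mul_one, ← Matrix.mul_assoc, hU, Matrix.one_mul, sub_self]
      rw [h0, Matrix.zero_mulVec]
    have hxMB : B.mulVec (M.mulVec x) = x := by
      rw [Matrix.mulVec_mulVec, hBM, Matrix.one_mulVec]
    -- decomposition of the error
    have hy : y = (U * Uᵀ).mulVec y + z := by
      rw [hz, Matrix.sub_mulVec, Matrix.one_mulVec]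
      abel
    have hz' : z = y - (U * Uᵀ).mulVec y := by
      rw [hz, Matrix.sub_mulVec, Matrix.one_mulVec]
    have hBg : B.mulVec (Pᵀ.mulVec ((U * Uᵀ).mulVec y)) = Uᵀ.mulVec y := by
      rw [Matrix.mulVec_mulVec, Matrix.mulVec_mulVec]
      congr 1
      simp only [← Matrix.mul_assoc]
      rw [Matrix.mul_assoc B Pᵀ U, ← hM, hBM, Matrix.one_mul]
    have hPi : (U * B * Pᵀ).mulVec y = (U * Uᵀ).mulVec y + U.mulVec x := by
      have e1 : (U * B * Pᵀ).mulVec y = U.mulVec (B.mulVec (Pᵀ.mulVec y)) := by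
        rw [Matrix.mulVec_mulVec, Matrix.mulVec_mulVec]
      rw [e1]
      conv_lhs => rw [hy]
      rw [Matrix.mulVec_add, Matrix.mulVec_add, hBg, ← hx, Matrix.mulVec_add,
        Matrix.mulVec_mulVec]
    have hdecomp : y - (U * B * Pᵀ).mulVec y = z - U.mulVec x := by
      rw [hPi, hz']
      abel
    have horth : (U.mulVec x) ⬝ᵥ z = 0 := by
      rw [dot_mulVec_left, hUz, dotProduct_zero]
    have hPtU : ∀ v : Fin n → ℝ, Pᵀ.mulVec (U.mulVec v) = M.mulVec v := by
      intro v
      rw [Matrix.mulVec_mulVec, ← hM]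
    have hMPz : Mᵀ.mulVec (Pᵀ.mulVec z) = (Mᵀ * M).mulVec x := by
      rw [hx, hBdef]
      simp only [Matrix.mulVec_mulVec]
      congr 1
      simp only [← Matrix.mul_assoc]
      rw [hinv2, Matrix.one_mul]
    have hQ1 : (M.mulVec x) ⬝ᵥ (Pᵀ.mulVec z) = (M.mulVec x) ⬝ᵥ (M.mulVec x) := by
      rw [dot_mulVec_left, hMPz]
      rw [dot_mulVec_left M x (M.mulVec x), Matrix.mulVec_mulVec]
    have hTs : ∑ i ∈ T, (U.mulVec x) i * (U.mulVec x) i = (M.mulVec x) ⬝ᵥ (M.mulVec x) := by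
      rw [← hsel, hPtU]
    have hTb : ∑ i ∈ T, z i * z i = (Pᵀ.mulVec z) ⬝ᵥ (Pᵀ.mulVec z) := (hsel z z).symm
    have hTo : ∑ i ∈ T, (U.mulVec x) i * z i = (M.mulVec x) ⬝ᵥ (Pᵀ.mulVec z) := by
      rw [← hsel, hPtU]
    obtain ⟨a, ha⟩ : ∃ r : ℝ, r = x ⬝ᵥ x := ⟨_, rfl⟩
    obtain ⟨Z, hZ⟩ : ∃ r : ℝ, r = z ⬝ᵥ z := ⟨_, rfl⟩
    obtain ⟨s, hs⟩ : ∃ r : ℝ, r = (M.mulVec x) ⬝ᵥ (M.mulVec x) := ⟨_, rfl⟩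
    obtain ⟨b, hbq⟩ : ∃ r : ℝ, r = (Pᵀ.mulVec z) ⬝ᵥ (Pᵀ.mulVec z) := ⟨_, rfl⟩
    have ha0 : 0 ≤ a := by rw [ha]; exact dot_self_nonneg x
    have hZ0 : 0 ≤ Z := by rw [hZ]; exact dot_self_nonneg z
    have hs0 : 0 ≤ s := by rw [hs]; exact dot_self_nonneg _
    have hb0 : 0 ≤ b := by rw [hbq]; exact dot_self_nonneg _
    have huniv1 : ∑ i, (U.mulVec x) i * (U.mulVec x) i = a := by
      rw [ha, ← hUiso x]
      exact (dot_eq_sum _ _).symm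
    have huniv2 : ∑ i, z i * z i = Z := by
      rw [hZ]
      exact (dot_eq_sum _ _).symm
    have huniv3 : ∑ i, (U.mulVec x) i * z i = 0 := horth
    have hcomp1 : ∑ i ∈ Tᶜ, (U.mulVec x) i * (U.mulVec x) i = a - s := by
      have h := Finset.sum_add_sum_compl T (fun i => (U.mulVec x) i * (U.mulVec x) i)
      rw [hTs, ← hs, huniv1] at h
      linarith
    have hcomp2 : ∑ i ∈ Tᶜ, z i * z i = Z - b := by
      have h := Finset.sum_add_sum_compl T (fun i => z i * z i)
      rw [hTb, ← hbq, huniv2] at h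
      linarith
    have hR : ∑ i ∈ Tᶜ, (U.mulVec x) i * z i = -s := by
      have h := Finset.sum_add_sum_compl T (fun i => (U.mulVec x) i * z i)
      rw [hTo, hQ1, ← hs, huniv3] at h
      linarith
    have hnn1 : 0 ≤ a - s := by
      rw [← hcomp1]
      exact Finset.sum_nonneg fun i _ => mul_self_nonneg _
    have hnn2 : 0 ≤ Z - b := by
      rw [← hcomp2]
      exact Finset.sum_nonneg fun i _ => mul_self_nonneg _
    have hcs : s ^ 2 ≤ (a - s) * (Z - b) := by
      have h := cs_finset Tᶜ (U.mulVec x) z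
      rw [hR, hcomp1, hcomp2] at h
      have hss : s ^ 2 = (-s) ^ 2 := by ring
      rw [hss]
      exact h
    have hsb : s ≤ b := by
      have h := cs_finset Finset.univ (M.mulVec x) (Pᵀ.mulVec z)
      have e1 : (∑ j, (M.mulVec x) j * (M.mulVec x) j) = s := by rw [hs, dot_eq_sum]
      have e2 : (∑ j, (Pᵀ.mulVec z) j * (Pᵀ.mulVec z) j) = b := by rw [hbq, dot_eq_sum]
      have e3 : (∑ j, (M.mulVec x) j * (Pᵀ.mulVec z) j) = s := by rw [hs, ← hQ1, dot_eq_sum]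
      rw [e1, e2, e3] at h
      rcases eq_or_lt_of_le hs0 with h0 | h0
      · rw [← h0]; exact hb0
      · rw [pow_two] at h
        exact le_of_mul_le_mul_left h h0
    have hc0' : 0 ≤ c := hc0
    have haa : a ≤ c ^ 2 * s := by
      have h1 := hcb (M.mulVec x)
      rw [hxMB] at h1
      have ea : enorm₂ x ^ 2 = a := by
        rw [ha, enorm₂_sq]
        simp [dotProduct, pow_two]
      have es : enorm₂ (M.mulVec x) ^ 2 = s := by
        rw [hs, enorm₂_sq]
        simp [dotProduct, pow_two]
      have h2 := mul_le_mul h1 h1 (enorm₂_nonneg x) (mul_nonneg hc0' (enorm₂_nonneg _))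
      calc a = enorm₂ x * enorm₂ x := by rw [← ea, pow_two]
      _ ≤ (c * enorm₂ (M.mulVec x)) * (c * enorm₂ (M.mulVec x)) := h2
      _ = c ^ 2 * s := by rw [← es]; ring
    have hkey : Z + a ≤ c ^ 2 * Z := by
      have hprod : 0 ≤ (a - s) * (b - s) := mul_nonneg hnn1 (by linarith)
      have h5 : s * (a + Z) ≤ a * Z := by
        have e : a * Z - s * (a + Z) = ((a - s) * (Z - b) - s ^ 2) + (a - s) * (b - s) := by
          ring
        linarith [hcs, hprod, e]
      rcases eq_or_lt_of_le ha0 with h | h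
      · have hcc : (1 : ℝ) ≤ c ^ 2 := by
          calc (1 : ℝ) = 1 * 1 := by ring
          _ ≤ c * c := mul_le_mul hc1 hc1 zero_le_one (le_trans zero_le_one hc1)
          _ = c ^ 2 := by ring
        have h9 := mul_le_mul_of_nonneg_right hcc hZ0
        rw [one_mul] at h9
        linarith [h9, h]
      · have h6 : c ^ 2 * (s * (a + Z)) ≤ c ^ 2 * (a * Z) :=
          mul_le_mul_of_nonneg_left h5 (sq_nonneg c)
        have h7 : a * (a + Z) ≤ c ^ 2 * s * (a + Z) :=
          mul_le_mul_of_nonneg_right haa (by linarith)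
        have h8 : a * (a + Z) ≤ a * (c ^ 2 * Z) := by
          have e1 : c ^ 2 * s * (a + Z) = c ^ 2 * (s * (a + Z)) := by ring
          have e2 : c ^ 2 * (a * Z) = a * (c ^ 2 * Z) := by ring
          linarith [h6, h7, e1, e2]
        have := le_of_mul_le_mul_left h8 h
        linarith
    have hfin : (z - U.mulVec x) ⬝ᵥ (z - U.mulVec x) = Z + a := by
      rw [sub_dotProduct, dotProduct_sub, dotProduct_sub]
      have h1 : z ⬝ᵥ (U.mulVec x) = 0 := by rw [dotProduct_comm]; exact horth
      rw [h1, horth, hUiso x, ← ha, ← hZ]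
      ring
    rw [hdecomp, enorm₂_eq_sqrt_dot, hfin]
    have hre : c * enorm₂ z = Real.sqrt (c ^ 2 * Z) := by
      rw [enorm₂_eq_sqrt_dot, ← hZ, Real.sqrt_mul (sq_nonneg c),
        Real.sqrt_sq (le_trans zero_le_one hc1)]
    rw [hre]
    exact Real.sqrt_le_sqrt hkey
end
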